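/- arXiv:1501.05070 — 3 statements merged into one kernel-verified Lean document; each statement's English description precedes it below -/
import Mathlib

section
/- For all x ∈ (0, π/2), one has π/2 + cos x < x/sin x + 2·(x/tan x) < 2 + cos x. -/
/-!
Since `x / sin x + 2 * (x / tan x) = x (1 + 2 cos x) / sin x`, both bounds say that
`sinTanGap c x = x (1 + 2 cos x) - (c + cos x) sin x` is positive for `c = π / 2` and negative for
`c = 2`. For `c = 2` the derivative `2 sin y (sin y - y)` is negative, and the gap vanishes at `0`.
For `c ≤ 2` the second derivative `(c - 4) sin y + 4 sin y cos y - 2 y cos y` is below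
`(c - 2) sin y ≤ 0` on `(0, π / 2)` because `sin y < y`; so `sinTanGap (π / 2)` is strictly concave
on `[0, π / 2]` and vanishes at both ends.
-/

open Real Set

noncomputable def sinTanGap (c y : ℝ) : ℝ := y * (1 + 2 * cos y) - (c + cos y) * sin y

lemma sinTanGap_zero (c : ℝ) : sinTanGap c 0 = 0 := by
  simp [sinTanGap]

lemma sinTanGap_pi_div_two : sinTanGap (π / 2) (π / 2) = 0 := by
  simp [sinTanGap]

lemma continuous_sinTanGap (c : ℝ) : Continuous (sinTanGap c) := by
  unfold sinTanGap
  fun_prop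

lemma hasDerivAt_sinTanGap (c y : ℝ) :
    HasDerivAt (sinTanGap c) (2 + (2 - c) * cos y - 2 * y * sin y - 2 * cos y ^ 2) y := by
  have h := ((hasDerivAt_id' y).mul (((hasDerivAt_cos y).const_mul 2).const_add 1)).sub
    (((hasDerivAt_cos y).const_add c).mul (hasDerivAt_sin y))
  refine h.congr_deriv ?_
  linear_combination sin_sq_add_cos_sq y

lemma deriv_sinTanGap (c : ℝ) :
    deriv (sinTanGap c) = fun y => 2 + (2 - c) * cos y - 2 * y * sin y - 2 * cos y ^ 2 :=
  funext fun y => (hasDerivAt_sinTanGap c y).deriv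

lemma deriv2_sinTanGap (c y : ℝ) :
    deriv^[2] (sinTanGap c) y = (c - 4) * sin y + 4 * sin y * cos y - 2 * y * cos y := by
  have h : HasDerivAt (fun y => 2 + (2 - c) * cos y - 2 * y * sin y - 2 * cos y ^ 2)
      ((c - 4) * sin y + 4 * sin y * cos y - 2 * y * cos y) y := by
    refine ((((hasDerivAt_cos y).const_mul (2 - c)).const_add 2).sub
      (((hasDerivAt_id' y).const_mul 2).mul (hasDerivAt_sin y))).sub
      (((hasDerivAt_cos y).pow 2).const_mul 2) |>.congr_deriv ?_
    ring
  rw [Function.iterate_succ_apply, Function.iterate_one, deriv_sinTanGap]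
  exact h.deriv

lemma strictAntiOn_sinTanGap_two : StrictAntiOn (sinTanGap 2) (Icc 0 π) := by
  refine strictAntiOn_of_deriv_neg (convex_Icc 0 π) (continuous_sinTanGap 2).continuousOn ?_
  rw [interior_Icc]
  rintro y ⟨hy0, hyπ⟩
  have hsin : 0 < sin y := sin_pos_of_pos_of_lt_pi hy0 hyπ
  have hsin_lt : sin y < y := sin_lt hy0
  rw [deriv_sinTanGap]
  nlinarith [sin_sq_add_cos_sq y]

lemma sinTanGap_two_neg {x : ℝ} (h0 : 0 < x) (hπ : x ≤ π) : sinTanGap 2 x < 0 := by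
  have h := strictAntiOn_sinTanGap_two (left_mem_Icc.2 pi_pos.le) ⟨h0.le, hπ⟩ h0
  rwa [sinTanGap_zero] at h

lemma strictConcaveOn_sinTanGap {c : ℝ} (hc : c ≤ 2) :
    StrictConcaveOn ℝ (Icc 0 (π / 2)) (sinTanGap c) := by
  refine strictConcaveOn_of_deriv2_neg (convex_Icc _ _) (continuous_sinTanGap c).continuousOn ?_
  rw [interior_Icc]
  rintro y ⟨hy0, hyπ⟩
  have hsin : 0 < sin y := sin_pos_of_pos_of_lt_pi hy0 (by linarith [pi_pos])
  have hcos : 0 < cos y := cos_pos_of_mem_Ioo ⟨by linarith, hyπ⟩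
  have hsin_lt : sin y < y := sin_lt hy0
  rw [deriv2_sinTanGap]
  nlinarith [cos_le_one y, mul_lt_mul_of_pos_right hsin_lt hcos]

lemma sinTanGap_pi_div_two_pos {x : ℝ} (h0 : 0 < x) (hπ : x < π / 2) :
    0 < sinTanGap (π / 2) x := by
  have hπ0 : (0 : ℝ) < π / 2 := by positivity
  have h := (strictConcaveOn_sinTanGap (c := π / 2) (by linarith [pi_le_four])).lt_on_openSegment
    (left_mem_Icc.2 hπ0.le) (right_mem_Icc.2 hπ0.le) hπ0.ne
    (by rw [openSegment_eq_Ioo hπ0]; exact ⟨h0, hπ⟩)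
  rwa [sinTanGap_zero, sinTanGap_pi_div_two, min_self] at h

lemma div_sin_add_two_mul_div_tan (x : ℝ) :
    x / sin x + 2 * (x / tan x) = x * (1 + 2 * cos x) / sin x := by
  rw [tan_eq_sin_div_cos, div_div_eq_mul_div]
  ring

theorem stmt7 (x : ℝ) (h0 : 0 < x) (h1 : x < π / 2) :
    π / 2 + Real.cos x < x / Real.sin x + 2 * (x / Real.tan x) ∧
    x / Real.sin x + 2 * (x / Real.tan x) < 2 + Real.cos x := by
  have hsin : 0 < sin x := sin_pos_of_pos_of_lt_pi h0 (by linarith [pi_pos])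
  have lower := sinTanGap_pi_div_two_pos h0 h1
  have upper := sinTanGap_two_neg h0 (by linarith [pi_pos])
  unfold sinTanGap at lower upper
  rw [div_sin_add_two_mul_div_tan, lt_div_iff₀ hsin, div_lt_iff₀ hsin]
  constructor <;> linarith
end

section
/- For all x ∈ (0, π/2), one has (cos x + 2)/3^{α₁} < sin x / x < (cos x + 2)/3, where α₁ = log π / log 3, and both constants are best possible. -/
/-!
Both inequalities compare `sin` with `x (cos x + 2)` and follow from calculus. Cusa–Huygens,
`3 sin x < x (cos x + 2)`, comes from differentiating three times: the third derivative of
`x (cos x + 2) - 3 sin x` is `x sin x > 0`, and all lower derivatives vanish at `0`. For the lower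
bound, `π sin x - x (cos x + 2)` vanishes at `0` and `π / 2` and is strictly concave on
`[0, π / 2]`, since its second derivative is `x cos x - (π - 2) sin x < (3 - π) sin x`. Sharpness:
`sin x / x` and `(cos x + 2) / 3` both tend to `1` at `0`, and the lower bound has the same limit
`2 / π` as `sin x / x` at `π / 2`, because `3 ^ (log π / log 3) = π`.
-/

open Real Set

theorem pos_of_hasDerivAt_pos_of_eq_zero {f f' : ℝ → ℝ} {b : ℝ}
    (hf : ∀ y, HasDerivAt f (f' y) y) (h0 : f 0 = 0) (hf' : ∀ y ∈ Ioo 0 b, 0 < f' y)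
    {x : ℝ} (hx : x ∈ Ioc 0 b) : 0 < f x := by
  have hmono : StrictMonoOn f (Icc 0 b) := by
    refine strictMonoOn_of_deriv_pos (convex_Icc 0 b)
      (fun y _ => (hf y).continuousAt.continuousWithinAt) fun y hy => ?_
    rw [interior_Icc] at hy
    rw [(hf y).deriv]
    exact hf' y hy
  simpa [h0] using hmono (left_mem_Icc.2 (hx.1.le.trans hx.2)) (Ioc_subset_Icc_self hx) hx.1

theorem StrictConcaveOn.of_hasDerivAt_of_hasDerivAt_neg {f f' f'' : ℝ → ℝ} {a b : ℝ}
    (hf : ∀ y, HasDerivAt f (f' y) y) (hf' : ∀ y, HasDerivAt f' (f'' y) y)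
    (hf'' : ∀ y ∈ Ioo a b, f'' y < 0) : StrictConcaveOn ℝ (Icc a b) f := by
  have hderiv : deriv f = f' := funext fun y => (hf y).deriv
  refine strictConcaveOn_of_deriv2_neg (convex_Icc a b)
    (fun y _ => (hf y).continuousAt.continuousWithinAt) fun y hy => ?_
  rw [interior_Icc] at hy
  rw [Function.iterate_succ_apply, Function.iterate_one, hderiv, (hf' y).deriv]
  exact hf'' y hy

theorem StrictConcaveOn.pos_of_eq_zero_of_eq_zero {f : ℝ → ℝ} {a b : ℝ}
    (hf : StrictConcaveOn ℝ (Icc a b) f) (ha : f a = 0) (hb : f b = 0) {x : ℝ}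
    (hx : x ∈ Ioo a b) : 0 < f x := by
  have hab : a < b := hx.1.trans hx.2
  simpa [ha, hb] using hf.lt_on_openSegment (left_mem_Icc.2 hab.le) (right_mem_Icc.2 hab.le)
    hab.ne (by rwa [openSegment_eq_Ioo hab])

theorem mul_cos_lt_sin {x : ℝ} (hx : x ∈ Ioc 0 π) : x * cos x < sin x := by
  have := pos_of_hasDerivAt_pos_of_eq_zero (f := fun y => sin y - y * cos y)
    (f' := fun y => y * sin y)
    (fun y =>
      ((hasDerivAt_sin y).sub ((hasDerivAt_id' y).mul (hasDerivAt_cos y))).congr_deriv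
        (by ring))
    (by simp) (fun y hy => mul_pos hy.1 (sin_pos_of_pos_of_lt_pi hy.1 hy.2)) hx
  simpa [sub_pos] using this

theorem mul_sin_lt_two_sub_two_mul_cos {x : ℝ} (hx : x ∈ Ioc 0 π) :
    x * sin x < 2 - 2 * cos x := by
  have := pos_of_hasDerivAt_pos_of_eq_zero (f := fun y => 2 - 2 * cos y - y * sin y)
    (f' := fun y => sin y - y * cos y)
    (fun y =>
      (((hasDerivAt_const y 2).sub ((hasDerivAt_cos y).const_mul 2)).sub
        ((hasDerivAt_id' y).mul (hasDerivAt_sin y))).congr_deriv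
        (by ring))
    (by simp) (fun y hy => sub_pos.2 (mul_cos_lt_sin (Ioo_subset_Ioc_self hy))) hx
  linarith

theorem three_mul_sin_lt_mul_cos_add_two {x : ℝ} (hx : 0 < x) :
    3 * sin x < x * (cos x + 2) := by
  rcases le_or_gt x π with hxπ | hπx
  · have := pos_of_hasDerivAt_pos_of_eq_zero (f := fun y => y * (cos y + 2) - 3 * sin y)
      (f' := fun y => 2 - 2 * cos y - y * sin y)
      (fun y =>
        (((hasDerivAt_id' y).mul ((hasDerivAt_cos y).add_const 2)).sub
          ((hasDerivAt_sin y).const_mul 3)).congr_deriv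
          (by ring))
      (by simp) (fun y hy => by linarith [mul_sin_lt_two_sub_two_mul_cos (Ioo_subset_Ioc_self hy)])
      ⟨hx, hxπ⟩
    linarith
  · nlinarith [sin_le_one x, neg_one_le_cos x, pi_gt_three]

theorem mul_cos_add_two_lt_pi_mul_sin {x : ℝ} (hx : x ∈ Ioo 0 (π / 2)) :
    x * (cos x + 2) < π * sin x := by
  have hconcave := StrictConcaveOn.of_hasDerivAt_of_hasDerivAt_neg (a := 0) (b := π / 2)
    (f := fun y => π * sin y - y * (cos y + 2))
    (f' := fun y => (π - 1) * cos y - 2 + y * sin y)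
    (f'' := fun y => (2 - π) * sin y + y * cos y)
    (fun y =>
      (((hasDerivAt_sin y).const_mul π).sub
        ((hasDerivAt_id' y).mul ((hasDerivAt_cos y).add_const 2))).congr_deriv
        (by ring))
    (fun y =>
      ((((hasDerivAt_cos y).const_mul (π - 1)).sub_const 2).add
        ((hasDerivAt_id' y).mul (hasDerivAt_sin y))).congr_deriv
        (by ring))
    (fun y hy => by
      have hyπ : y < π := by linarith [hy.2, pi_pos]
      nlinarith [mul_cos_lt_sin ⟨hy.1, hyπ.le⟩, sin_pos_of_pos_of_lt_pi hy.1 hyπ, pi_gt_three])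
  simpa [sub_pos] using hconcave.pos_of_eq_zero_of_eq_zero (by simp) (by simp) hx

theorem le_of_lt_on_Ioo {f g : ℝ → ℝ} (hf : Continuous f) (hg : Continuous g) {a b : ℝ}
    (hab : a ≠ b) (h : ∀ x ∈ Ioo a b, f x < g x) {x : ℝ} (hx : x ∈ Icc a b) : f x ≤ g x := by
  rw [← closure_Ioo hab] at hx
  exact closure_lt_subset_le hf hg (closure_mono h hx)

theorem stmt13 :
    (∀ x : ℝ, x ∈ Ioo 0 (π / 2) →
      (Real.cos x + 2) / (3 : ℝ) ^ (Real.log π / Real.log 3) < Real.sin x / x ∧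
      Real.sin x / x < (Real.cos x + 2) / 3) ∧
    (∀ a : ℝ,
      (∀ x : ℝ, x ∈ Ioo 0 (π / 2) →
        (Real.cos x + 2) / (3 : ℝ) ^ a < Real.sin x / x) →
      Real.log π / Real.log 3 ≤ a) ∧
    (∀ b : ℝ,
      (∀ x : ℝ, x ∈ Ioo 0 (π / 2) →
        Real.sin x / x < (Real.cos x + 2) / (3 : ℝ) ^ b) →
      b ≤ 1) := by
  have hcont (c : ℝ) : Continuous fun x => (cos x + 2) / (3 : ℝ) ^ c :=
    (continuous_cos.add continuous_const).div_const _
  -- `sinc` is continuous at `0`, unlike `sin x / x`, whose junk value there is `0`.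
  have hsinc {x : ℝ} (hx : x ∈ Ioo 0 (π / 2)) : sin x / x = sinc x :=
    (sinc_of_ne_zero hx.1.ne').symm
  rw [log_div_log]
  refine ⟨fun x hx => ⟨?_, ?_⟩, fun a ha => ?_, fun b hb => ?_⟩
  · rw [rpow_logb (by norm_num) (by norm_num) pi_pos, div_lt_div_iff₀ pi_pos hx.1]
    linarith [mul_cos_add_two_lt_pi_mul_sin hx]
  · rw [div_lt_div_iff₀ hx.1 three_pos]
    linarith [three_mul_sin_lt_mul_cos_add_two hx.1]
  · have hend := le_of_lt_on_Ioo (hcont a) continuous_sinc pi_div_two_pos.ne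
      (fun x hx => hsinc hx ▸ ha x hx) (right_mem_Icc.2 pi_div_two_pos.le)
    rw [cos_pi_div_two, sinc_of_ne_zero pi_div_two_pos.ne', sin_pi_div_two, zero_add,
      div_le_div_iff₀ (by positivity) pi_div_two_pos] at hend
    rw [logb_le_iff_le_rpow (by norm_num) pi_pos]
    linarith
  · have hend := le_of_lt_on_Ioo continuous_sinc (hcont b) pi_div_two_pos.ne
      (fun x hx => hsinc hx ▸ hb x hx) (left_mem_Icc.2 pi_div_two_pos.le)
    rw [sinc_zero, cos_zero, le_div_iff₀ (by positivity), one_mul] at hend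
    rw [← rpow_le_rpow_left_iff (by norm_num : (1 : ℝ) < 3), rpow_one]
    linarith
end

section
/- The function f(x) = (cos x − 1)/((sin x)/x − 1) is strictly decreasing on (0, π/2), with limit 3 as x → 0+ and limit π/(π−2) as x → π/2−. -/
open Real Set Filter Topology

noncomputable def f17 (x : ℝ) : ℝ := (Real.cos x - 1) / (Real.sin x / x - 1)

/-!
For `x ≠ 0`, `f17 x = x (1 - cos x) / (x - sin x)`, whose derivative has the sign of
`x² sin x - (1 - cos x)(sin x + x)`. The Taylor polynomials of `sin` and `cos` alternately
over- and undershoot on `[0, ∞)`, each bound following from the previous one by integration;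
with those of degree up to 8 the sign expression is below `-x⁷` times a polynomial that stays
positive on `(0, 2]`. The same bounds squeeze `(1 - cos x) / x² → 1/2` and
`(x - sin x) / x³ → 1/6`, giving the limit `3` at `0`; at `π/2` the function is continuous.
-/

open Finset
open scoped Nat

noncomputable section

def sinTaylor (n : ℕ) (x : ℝ) : ℝ := ∑ k ∈ range n, (-1) ^ k * x ^ (2 * k + 1) / (2 * k + 1)!

def cosTaylor (n : ℕ) (x : ℝ) : ℝ := ∑ k ∈ range n, (-1) ^ k * x ^ (2 * k) / (2 * k)!

end

lemma hasDerivAt_sinTaylor (n : ℕ) (x : ℝ) : HasDerivAt (sinTaylor n) (cosTaylor n x) x := by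
  refine (HasDerivAt.fun_sum fun k _ => ((hasDerivAt_pow (2 * k + 1) x).const_mul
    ((-1 : ℝ) ^ k)).div_const ((2 * k + 1)! : ℝ)).congr_deriv (sum_congr rfl fun k _ => ?_)
  rw [Nat.factorial_succ]
  push_cast
  field_simp

lemma hasDerivAt_cosTaylor (n : ℕ) (x : ℝ) :
    HasDerivAt (cosTaylor (n + 1)) (-sinTaylor n x) x := by
  have hsplit : cosTaylor (n + 1) =
      fun y : ℝ => ∑ k ∈ range n, (-1 : ℝ) ^ (k + 1) * y ^ (2 * k + 2) / (2 * k + 2)! + 1 := by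
    ext y
    simp [cosTaylor, sum_range_succ', mul_add]
  rw [hsplit, sinTaylor, ← sum_neg_distrib]
  refine ((HasDerivAt.fun_sum fun k _ => ((hasDerivAt_pow (2 * k + 2) x).const_mul
    ((-1 : ℝ) ^ (k + 1))).div_const ((2 * k + 2)! : ℝ)).add_const 1).congr_deriv
    (sum_congr rfl fun k _ => ?_)
  rw [show 2 * k + 2 = (2 * k + 1) + 1 by ring, Nat.factorial_succ]
  push_cast
  field_simp
  ring

lemma nonneg_of_hasDerivAt_nonneg {F F' : ℝ → ℝ} (hF : ∀ y, 0 ≤ y → HasDerivAt F (F' y) y)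
    (h0 : F 0 = 0) (hF' : ∀ y, 0 ≤ y → 0 ≤ F' y) {x : ℝ} (hx : 0 ≤ x) : 0 ≤ F x := by
  have hmono : MonotoneOn F (Ici 0) :=
    monotoneOn_of_hasDerivWithinAt_nonneg (convex_Ici 0)
      (fun y hy => (hF y hy).continuousAt.continuousWithinAt)
      (fun y hy => (hF y (interior_subset hy)).hasDerivWithinAt)
      (fun y hy => hF' y (interior_subset hy))
  simpa [h0] using hmono self_mem_Ici hx hx

lemma neg_one_pow_mul_sin_sub_sinTaylor_nonneg_of_cos {n : ℕ}
    (hcos : ∀ y, 0 ≤ y → 0 ≤ (-1) ^ n * (cos y - cosTaylor n y)) {x : ℝ} (hx : 0 ≤ x) :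
    0 ≤ (-1) ^ n * (sin x - sinTaylor n x) :=
  nonneg_of_hasDerivAt_nonneg
    (fun y _ => ((hasDerivAt_sin y).sub (hasDerivAt_sinTaylor n y)).const_mul _)
    (by simp [sinTaylor]) hcos hx

lemma neg_one_pow_mul_cos_sub_cosTaylor_nonneg (n : ℕ) {x : ℝ} (hx : 0 ≤ x) :
    0 ≤ (-1) ^ (n + 1) * (cos x - cosTaylor (n + 1) x) := by
  induction n generalizing x with
  | zero => simpa [cosTaylor] using cos_le_one x
  | succ n ih =>
    refine nonneg_of_hasDerivAt_nonneg
      (fun y _ => ((hasDerivAt_cos y).sub (hasDerivAt_cosTaylor (n + 1) y)).const_mul _)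
      (by simp [cosTaylor, sum_range_succ']) (fun y hy => ?_) hx
    convert neg_one_pow_mul_sin_sub_sinTaylor_nonneg_of_cos (fun z hz => ih hz) hy using 1
    ring

lemma neg_one_pow_mul_sin_sub_sinTaylor_nonneg (n : ℕ) {x : ℝ} (hx : 0 ≤ x) :
    0 ≤ (-1) ^ (n + 1) * (sin x - sinTaylor (n + 1) x) :=
  neg_one_pow_mul_sin_sub_sinTaylor_nonneg_of_cos
    (fun _ hy => neg_one_pow_mul_cos_sub_cosTaylor_nonneg n hy) hx

lemma sin_le_quintic {x : ℝ} (hx : 0 ≤ x) : sin x ≤ x - x ^ 3 / 6 + x ^ 5 / 120 := by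
  have := neg_one_pow_mul_sin_sub_sinTaylor_nonneg 2 hx
  norm_num [sinTaylor, sum_range_succ, Nat.factorial] at this
  linarith

lemma cos_le_quartic {x : ℝ} (hx : 0 ≤ x) : cos x ≤ 1 - x ^ 2 / 2 + x ^ 4 / 24 := by
  have := neg_one_pow_mul_cos_sub_cosTaylor_nonneg 2 hx
  norm_num [cosTaylor, sum_range_succ, Nat.factorial] at this
  linarith

lemma sq_mul_sin_lt_one_sub_cos_mul_sin_add_self {x : ℝ} (hx : 0 < x) (hx2 : x ≤ 2) :
    x ^ 2 * sin x < (1 - cos x) * (sin x + x) := by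
  have hsin_ge : x - x ^ 3 / 6 + x ^ 5 / 120 - x ^ 7 / 5040 ≤ sin x := by
    have := neg_one_pow_mul_sin_sub_sinTaylor_nonneg 3 hx.le
    norm_num [sinTaylor, sum_range_succ, Nat.factorial] at this
    linarith
  have hcos_le : cos x ≤ 1 - x ^ 2 / 2 + x ^ 4 / 24 - x ^ 6 / 720 + x ^ 8 / 40320 := by
    have := neg_one_pow_mul_cos_sub_cosTaylor_nonneg 4 hx.le
    norm_num [cosTaylor, sum_range_succ, Nat.factorial] at this
    linarith
  have hx_sq : x ^ 2 ≤ 4 := by nlinarith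
  have hq : 0 ≤ 2 * x - x ^ 3 / 6 + x ^ 5 / 120 - x ^ 7 / 5040 := by
    have : 0 ≤ x * (2 - x ^ 2 / 6) + x ^ 5 * (1 / 120 - x ^ 2 / 5040) :=
      add_nonneg (mul_nonneg hx.le (by linarith)) (mul_nonneg (by positivity) (by linarith))
    linarith
  -- the product of the two lower bounds below exceeds `x² (x - x³/6 + x⁵/120)` by `x⁷` times this
  have hgap : 0 < (1 / 180 - 11 / 15120 * x ^ 2) + x ^ 4 * (29 / 1209600 - x ^ 2 / 2073600) +
      x ^ 8 / 203212800 :=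
    add_pos_of_pos_of_nonneg (add_pos_of_pos_of_nonneg (by linarith)
      (mul_nonneg (by positivity) (by linarith))) (by positivity)
  calc x ^ 2 * sin x ≤ x ^ 2 * (x - x ^ 3 / 6 + x ^ 5 / 120) := by
        gcongr
        exact sin_le_quintic hx.le
    _ < (x ^ 2 / 2 - x ^ 4 / 24 + x ^ 6 / 720 - x ^ 8 / 40320) *
        (2 * x - x ^ 3 / 6 + x ^ 5 / 120 - x ^ 7 / 5040) := by
      linear_combination mul_pos (pow_pos hx 7) hgap
    _ ≤ (1 - cos x) * (sin x + x) :=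
      mul_le_mul (by linarith) (by linarith) hq (sub_nonneg.2 (cos_le_one x))

lemma tendsto_div_pow_nhdsGT_zero_of_bounds {g : ℝ → ℝ} {n : ℕ} {c d : ℝ}
    (hlower : ∀ x, 0 < x → c * x ^ n - d * x ^ (n + 2) ≤ g x)
    (hupper : ∀ x, 0 < x → g x ≤ c * x ^ n) :
    Tendsto (fun x => g x / x ^ n) (𝓝[>] 0) (𝓝 c) := by
  have hquad : Tendsto (fun x : ℝ => c - d * x ^ 2) (𝓝[>] 0) (𝓝 c) := by
    have hcont : Continuous fun x : ℝ => c - d * x ^ 2 := by fun_prop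
    simpa using (hcont.tendsto 0).mono_left nhdsWithin_le_nhds
  refine tendsto_of_tendsto_of_tendsto_of_le_of_le' hquad tendsto_const_nhds ?_ ?_
  all_goals filter_upwards [self_mem_nhdsWithin] with x (hx : 0 < x)
  · rw [le_div_iff₀ (by positivity)]
    linear_combination hlower x hx
  · rw [div_le_iff₀ (by positivity)]
    exact hupper x hx

lemma f17_eq_of_ne_zero {x : ℝ} (hx : x ≠ 0) : f17 x = x * (1 - cos x) / (x - sin x) := by
  rw [f17, div_sub_one hx, div_div_eq_mul_div, ← neg_div_neg_eq]
  ring_nf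

lemma hasDerivAt_f17 {x : ℝ} (hx : 0 < x) :
    HasDerivAt f17 ((x ^ 2 * sin x - (1 - cos x) * (sin x + x)) / (x - sin x) ^ 2) x := by
  have hden : x - sin x ≠ 0 := (sub_pos.2 (sin_lt hx)).ne'
  have heq : f17 =ᶠ[𝓝 x] fun y => y * (1 - cos y) / (y - sin y) := by
    filter_upwards [lt_mem_nhds hx] with y hy
    exact f17_eq_of_ne_zero hy.ne'
  have hquot := ((hasDerivAt_id' x).fun_mul ((hasDerivAt_cos x).const_sub 1)).fun_div
    ((hasDerivAt_id' x).fun_sub (hasDerivAt_sin x)) hden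
  refine (hquot.congr_of_eventuallyEq heq).congr_deriv ?_
  field_simp
  linear_combination (-x) * sin_sq_add_cos_sq x

theorem stmt17 :
    StrictAntiOn f17 (Ioo 0 (π / 2)) ∧
    Filter.Tendsto f17 (nhdsWithin 0 (Ioi 0)) (nhds 3) ∧
    Filter.Tendsto f17 (nhdsWithin (π / 2) (Iio (π / 2))) (nhds (π / (π - 2))) := by
  refine ⟨?_, ?_, ?_⟩
  · refine strictAntiOn_of_hasDerivWithinAt_neg (convex_Ioo 0 (π / 2))
      (fun x hx => (hasDerivAt_f17 hx.1).continuousAt.continuousWithinAt)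
      (fun x hx => (hasDerivAt_f17 (interior_subset hx).1).hasDerivWithinAt) fun x hx => ?_
    obtain ⟨hx0, hxπ⟩ := interior_subset hx
    have hx2 : x ≤ 2 := by linarith [pi_lt_four]
    exact div_neg_of_neg_of_pos (sub_neg.2 (sq_mul_sin_lt_one_sub_cos_mul_sin_add_self hx0 hx2))
      (pow_pos (sub_pos.2 (sin_lt hx0)) 2)
  · have hcos := tendsto_div_pow_nhdsGT_zero_of_bounds (g := fun x => 1 - cos x) (n := 2)
      (c := 1 / 2) (d := 1 / 24) (fun x hx => by linarith [cos_le_quartic hx.le])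
      (fun x _ => by linarith [one_sub_sq_div_two_le_cos (x := x)])
    have hsin := tendsto_div_pow_nhdsGT_zero_of_bounds (g := fun x => x - sin x) (n := 3)
      (c := 1 / 6) (d := 1 / 120) (fun x hx => by linarith [sin_le_quintic hx.le])
      (fun x hx => by linarith [sin_ge_sub_cube hx.le])
    convert (hcos.div hsin (by norm_num)).congr' ?_ using 2
    · norm_num
    filter_upwards [self_mem_nhdsWithin] with x (hx : 0 < x)
    rw [Pi.div_apply, f17_eq_of_ne_zero hx.ne']
    field_simp
  · have hπ : (2 : ℝ) < π := by linarith [pi_gt_three]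
    have hval : f17 (π / 2) = π / (π - 2) := by
      rw [f17_eq_of_ne_zero (by positivity), sin_pi_div_two, cos_pi_div_two, sub_zero, mul_one]
      field_simp
    rw [← hval]
    exact (hasDerivAt_f17 (by positivity)).continuousAt.continuousWithinAt.tendsto
end
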